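/- arXiv:2504.17831 — 8 statements merged into one kernel-verified Lean document; each statement's English description precedes it below -/
import Mathlib

section
/- Let 𝒞 be a treeset on a set X. Then for any u, v ∈ V_𝒞, the set u ∖ v is finite and is totally ordered by inclusion. -/
open Set

/-- A family of sets is *nested* if for any two members, one of the four
intersections of the sets or their complements is empty. -/
def Nested {X : Type*} (𝒞 : Set (Set X)) : Prop :=
  ∀ C ∈ 𝒞, ∀ D ∈ 𝒞, C ∩ D = ∅ ∨ C ∩ Dᶜ = ∅ ∨ Cᶜ ∩ D = ∅ ∨ Cᶜ ∩ Dᶜ = ∅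

/-- A *treeset* on `X`: a family of nonempty proper subsets of `X` that is nested,
closed under complementation and finitely separating. -/
def Treeset {X : Type*} (𝒞 : Set (Set X)) : Prop :=
  (∀ C ∈ 𝒞, C.Nonempty ∧ C ≠ Set.univ) ∧
  Nested 𝒞 ∧
  (∀ C ∈ 𝒞, Cᶜ ∈ 𝒞) ∧
  (∀ x y : X, {C | C ∈ 𝒞 ∧ x ∈ C ∧ y ∉ C}.Finite)

/-- The vertices `V_𝒞` of the structure tree: subsets `u ⊆ 𝒞` satisfying (U1)–(U3). -/
def IsVertex {X : Type*} (𝒞 : Set (Set X)) (u : Set (Set X)) : Prop :=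
  u ⊆ 𝒞 ∧
  (∀ C ∈ 𝒞, Xor' (C ∈ u) (Cᶜ ∈ u)) ∧
  (∀ C ∈ u, ∀ D ∈ 𝒞, C ⊆ D → D ∈ u) ∧
  ¬ ∃ f : ℕ → Set X, (∀ n, f n ∈ u) ∧ ∀ n, f (n + 1) ⊂ f n

/-- For a treeset `𝒞` on `X` and vertices `u, v ∈ V_𝒞`,
the set `u \ v` is finite and totally ordered by inclusion. -/
theorem diff_of_vertices_finite_and_chain {X : Type*} (𝒞 : Set (Set X))
    (u v : Set (Set X)) (h𝒞 : Treeset 𝒞) (hu : IsVertex 𝒞 u) (hv : IsVertex 𝒞 v) :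
    (u \ v).Finite ∧ IsChain (· ⊆ ·) (u \ v) := by
  obtain ⟨-, hnest, hcompl, -⟩ := h𝒞
  obtain ⟨hu𝒞, hu1, hu2, hu3⟩ := hu
  obtain ⟨hv𝒞, hv1, hv2, hv3⟩ := hv
  have hchain : IsChain (· ⊆ ·) (u \ v) := by
    rintro C ⟨hCu, hCv⟩ D ⟨hDu, hDv⟩ hne
    have hC𝒞 : C ∈ 𝒞 := hu𝒞 hCu
    have hD𝒞 : D ∈ 𝒞 := hu𝒞 hDu
    rcases hnest C hC𝒞 D hD𝒞 with h | h | h | h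
    · -- C ∩ D = ∅ : then C ⊆ Dᶜ, so Dᶜ ∈ u, contradicting D ∈ u
      exfalso
      have hsub : C ⊆ Dᶜ := by
        intro x hx hxD
        exact absurd h (Set.nonempty_iff_ne_empty.mp ⟨x, hx, hxD⟩)
      have hDc : Dᶜ ∈ u := hu2 C hCu Dᶜ (hcompl D hD𝒞) hsub
      rcases hu1 D hD𝒞 with ⟨-, h2⟩ | ⟨-, h2⟩
      · exact h2 hDc
      · exact h2 hDu
    · -- C ∩ Dᶜ = ∅ : C ⊆ D
      left
      intro x hx
      by_contra hxD
      exact absurd h (Set.nonempty_iff_ne_empty.mp ⟨x, hx, hxD⟩)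
    · -- Cᶜ ∩ D = ∅ : D ⊆ C
      right
      intro x hx
      by_contra hxC
      exact absurd h (Set.nonempty_iff_ne_empty.mp ⟨x, hxC, hx⟩)
    · -- Cᶜ ∩ Dᶜ = ∅ : then Cᶜ ⊆ D, with Cᶜ ∈ v this forces D ∈ v
      exfalso
      have hCc : Cᶜ ∈ v := by
        rcases hv1 C hC𝒞 with ⟨h1, -⟩ | ⟨h1, -⟩
        · exact absurd h1 hCv
        · exact h1
      have hsub : Cᶜ ⊆ D := by
        intro x hx
        by_contra hxD
        exact absurd h (Set.nonempty_iff_ne_empty.mp ⟨x, hx, hxD⟩)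
      exact hDv (hv2 Cᶜ hCc D hD𝒞 hsub)
  refine ⟨?_, hchain⟩
  by_contra hinf
  rw [← Set.not_infinite, not_not] at hinf
  let e := hinf.natEmbedding
  set f : ℕ → Set X := fun n => (e n : Set X) with hfdef
  have hfmem : ∀ n, f n ∈ u \ v := fun n => (e n).2
  have hfinj : Function.Injective f := fun a b hab => e.injective (Subtype.ext hab)
  have : IsTrans (Set X) (· ⊂ ·) := ⟨fun _ _ _ => ssubset_trans⟩
  obtain ⟨g, hg | hg⟩ := exists_increasing_or_nonincreasing_subseq (α := Set X) (· ⊂ ·) f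
  · -- strictly increasing: complements give a strictly decreasing sequence in v
    apply hv3
    refine ⟨fun n => (f (g n))ᶜ, fun n => ?_, fun n => ?_⟩
    · rcases hv1 (f (g n)) (hu𝒞 (hfmem (g n)).1) with ⟨h1, -⟩ | ⟨h1, -⟩
      · exact absurd h1 (hfmem (g n)).2
      · exact h1
    · have := hg n (n + 1) (Nat.lt_succ_self n)
      exact Set.ssubset_iff_of_subset (Set.compl_subset_compl.mpr this.1) |>.mpr (by
        obtain ⟨x, hx1, hx2⟩ := Set.exists_of_ssubset this
        exact ⟨x, by simpa using hx2, by simpa using hx1⟩)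
  · -- no increasing pair: by the chain property, strictly decreasing sequence in u
    apply hu3
    refine ⟨fun n => f (g n), fun n => (hfmem (g n)).1, fun n => ?_⟩
    have hlt : g n < g (n + 1) := g.strictMono (Nat.lt_succ_self n)
    have hne : f (g (n + 1)) ≠ f (g n) := fun h => (Nat.lt_irrefl _ (hfinj h ▸ hlt)).elim
    rcases hchain (hfmem (g n)) (hfmem (g (n + 1))) (fun h => hne h.symm) with h | h
    · exact absurd (HasSubset.Subset.ssubset_of_ne h hne.symm) (hg n (n + 1) (Nat.lt_succ_self n))
    · exact HasSubset.Subset.ssubset_of_ne h hne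
end

section
/- Let 𝒞 be a treeset on a set X and u, v ∈ V_𝒞. If C is a minimal element (with respect to inclusion) of u ∖ v, then C is a minimal element of u. In particular, if (u,v) is an edge of T_𝒞 (i.e., |u ∖ v| = 1), then the unique element of u ∖ v is minimal in u. -/
open Set

/-- If `C` is a minimal element of `u \ v` (w.r.t. inclusion), then `C` is
minimal in `u`; in particular, if `u \ v = {C}` (an edge of `T_𝒞`), then `C` is minimal in `u`. -/
theorem minimal_in_diff_is_minimal {X : Type*} (𝒞 : Set (Set X))
    (u v : Set (Set X)) (h𝒞 : Treeset 𝒞) (hu : IsVertex 𝒞 u) (hv : IsVertex 𝒞 v) :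
    (∀ C ∈ u \ v, (∀ D ∈ u \ v, D ⊆ C → D = C) →
      C ∈ u ∧ ∀ D ∈ u, D ⊆ C → D = C) ∧
    (∀ C, u \ v = {C} → C ∈ u ∧ ∀ D ∈ u, D ⊆ C → D = C) := by
  obtain ⟨husub, -, -, -⟩ := hu
  obtain ⟨-, -, hv2, -⟩ := hv
  have main : ∀ C ∈ u \ v, (∀ D ∈ u \ v, D ⊆ C → D = C) →
      C ∈ u ∧ ∀ D ∈ u, D ⊆ C → D = C := by
    intro C hC hmin
    refine ⟨hC.1, fun D hD hDC => ?_⟩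
    have hDv : D ∉ v := fun hDv => hC.2 (hv2 D hDv C (husub hC.1) hDC)
    exact hmin D ⟨hD, hDv⟩ hDC
  refine ⟨main, fun C hCeq => ?_⟩
  have hC : C ∈ u \ v := hCeq ▸ rfl
  exact main C hC fun D hD _ => by
    have : D ∈ ({C} : Set (Set X)) := hCeq ▸ hD
    exact this
end

section
/- Let 𝒞 be a treeset on a set X and v ∈ V_𝒞. If C₀ is a minimal element of v (with respect to inclusion), then the symmetric difference v △ {C₀, C̄₀} belongs to V_𝒞. -/
open Set

/-- If `C₀` is a minimal element of a vertex `v ∈ V_𝒞`, then the symmetric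
difference `v △ {C₀, C₀ᶜ}` belongs to `V_𝒞`. -/
theorem symmDiff_of_minimal_isVertex {X : Type*} (𝒞 : Set (Set X))
    (v : Set (Set X)) (h𝒞 : Treeset 𝒞) (hv : IsVertex 𝒞 v) (C₀ : Set X)
    (hC₀ : C₀ ∈ v) (hmin : ∀ D ∈ v, D ⊆ C₀ → D = C₀) :
    IsVertex 𝒞 (symmDiff v {C₀, C₀ᶜ}) := by
  obtain ⟨hproper, hnested, hcompl, hsep⟩ := h𝒞
  obtain ⟨hsub, hxor, hup, hchain⟩ := hv
  have hC₀𝒞 : C₀ ∈ 𝒞 := hsub hC₀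
  have hC₀c𝒞 : C₀ᶜ ∈ 𝒞 := hcompl _ hC₀𝒞
  have hC₀c : C₀ᶜ ∉ v := by
    rcases hxor C₀ hC₀𝒞 with ⟨_, h⟩ | ⟨_, h⟩
    · exact h
    · exact absurd hC₀ h
  have hne : C₀ ≠ C₀ᶜ := by
    intro h
    obtain ⟨x, hx⟩ := (hproper C₀ hC₀𝒞).1
    have : x ∈ C₀ᶜ := h ▸ hx
    exact this hx
  have hmemw : ∀ C, C ∈ symmDiff v {C₀, C₀ᶜ} ↔ (C ∈ v ∧ C ≠ C₀) ∨ C = C₀ᶜ := by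
    intro C
    rw [Set.mem_symmDiff]
    constructor
    · rintro (⟨hCv, hC⟩ | ⟨hC, hCv⟩)
      · exact Or.inl ⟨hCv, fun h => hC (by simp [h])⟩
      · rcases hC with h | h
        · exact absurd (h ▸ hC₀) hCv
        · exact Or.inr h
    · rintro (⟨hCv, hC⟩ | h)
      · refine Or.inl ⟨hCv, ?_⟩
        rintro (h | h)
        · exact hC h
        · exact hC₀c (h ▸ hCv)
      · exact Or.inr ⟨Or.inr h, fun hh => hC₀c (h ▸ hh)⟩
  refine ⟨?_, ?_, ?_, ?_⟩
  · -- subset of 𝒞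
    intro C hC
    rcases (hmemw C).1 hC with ⟨hCv, _⟩ | h
    · exact hsub hCv
    · exact h ▸ hC₀c𝒞
  · -- Xor'
    intro C hC𝒞
    by_cases h1 : C = C₀
    · subst h1
      right
      constructor
      · exact (hmemw _).2 (Or.inr rfl)
      · intro h
        rcases (hmemw _).1 h with ⟨_, hC⟩ | hC
        · exact hC rfl
        · exact hne hC
    by_cases h2 : C = C₀ᶜ
    · subst h2
      left
      refine ⟨(hmemw _).2 (Or.inr rfl), ?_⟩
      intro h
      rcases (hmemw _).1 h with ⟨_, hC⟩ | hC
      · exact hC (compl_compl C₀)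
      · exact hne (by simpa using hC)
    · -- membership unchanged
      have h2' : Cᶜ ≠ C₀ := fun h => h2 (by rw [← h, compl_compl])
      have h1' : Cᶜ ≠ C₀ᶜ := fun h => h1 (by
        have := congrArg compl h; simpa using this)
      rcases hxor C hC𝒞 with ⟨ha, hb⟩ | ⟨ha, hb⟩
      · left
        exact ⟨(hmemw _).2 (Or.inl ⟨ha, h1⟩), fun h => by
          rcases (hmemw _).1 h with ⟨hv', _⟩ | h
          · exact hb hv'
          · exact h1' h⟩
      · right
        refine ⟨(hmemw _).2 (Or.inl ⟨ha, h2'⟩), fun h => ?_⟩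
        rcases (hmemw _).1 h with ⟨hv', _⟩ | h
        · exact hb hv'
        · exact h2 h
  · -- upward closed
    intro C hC D hD𝒞 hCD
    rcases (hmemw C).1 hC with ⟨hCv, hCne⟩ | h
    · have hDv : D ∈ v := hup C hCv D hD𝒞 hCD
      refine (hmemw D).2 (Or.inl ⟨hDv, ?_⟩)
      intro h
      subst h
      exact hCne (hmin C hCv hCD)
    · subst h
      by_cases hD : D = C₀ᶜ
      · exact (hmemw D).2 (Or.inr hD)
      · have hDne : D ≠ C₀ := by
          intro h
          have hsub' : C₀ᶜ ⊆ C₀ := h ▸ hCD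
          have hempty : C₀ᶜ = (∅ : Set X) := by
            ext x
            simp only [Set.mem_empty_iff_false, iff_false]
            intro hx
            exact hx (hsub' hx)
          exact (hproper C₀ hC₀𝒞).2
            (by rw [← compl_compl C₀, hempty, Set.compl_empty])
        have hDv : D ∈ v := by
          rcases hxor D hD𝒞 with ⟨h, _⟩ | ⟨h, _⟩
          · exact h
          · exfalso
            have hsubc : Dᶜ ⊆ C₀ := by
              intro x hx
              by_contra hxc
              exact hx (hCD hxc)
            have := hmin Dᶜ h hsubc
            exact hD (by rw [← this, compl_compl])
        exact (hmemw D).2 (Or.inl ⟨hDv, hDne⟩)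
  · -- no infinite descending chain
    rintro ⟨f, hf, hdec⟩
    have hanti : StrictAnti f := strictAnti_nat_of_succ_lt hdec
    by_cases h : ∃ n, f n = C₀ᶜ
    · obtain ⟨n₀, hn₀⟩ := h
      refine hchain ⟨fun k => f (n₀ + 1 + k), fun k => ?_, fun k => ?_⟩
      · rcases (hmemw _).1 (hf (n₀ + 1 + k)) with ⟨hv', _⟩ | hc
        · exact hv'
        · exfalso
          have : f (n₀ + 1 + k) ⊂ f n₀ := hanti (by omega)
          rw [hc, hn₀] at this
          exact this.2 this.1
      · exact hanti (by omega)
    · push_neg at h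
      refine hchain ⟨f, fun n => ?_, hdec⟩
      rcases (hmemw _).1 (hf n) with ⟨hv', _⟩ | hc
      · exact hv'
      · exact absurd hc (h n)
end

section
/- Let 𝒞 be a treeset on a set X. Then for every C ∈ 𝒞 there exists a unique pair (u,v) ∈ T_𝒞 such that u ∖ v = {C}. Equivalently, there is a unique u ∈ V_𝒞 in which C is a minimal element. -/
open Set

/-- The canonical vertex in which `C` is minimal. -/
def uC {X : Type*} (𝒞 : Set (Set X)) (C : Set X) : Set (Set X) :=
  {D | D ∈ 𝒞 ∧ (C ⊆ D ∨ Cᶜ ⊂ D)}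

lemma disj_subset {X : Type*} {A B : Set X} (h : A ∩ B = ∅) : A ⊆ Bᶜ := by
  intro x hx hxB
  have hmem : x ∈ A ∩ B := ⟨hx, hxB⟩
  rw [h] at hmem
  exact hmem

lemma nested_cases {X : Type*} {𝒞 : Set (Set X)} (hN : Nested 𝒞)
    {C D : Set X} (hC : C ∈ 𝒞) (hD : D ∈ 𝒞) :
    C ⊆ D ∨ D ⊆ C ∨ C ⊆ Dᶜ ∨ Dᶜ ⊆ C := by
  rcases hN C hC D hD with h | h | h | h
  · exact Or.inr (Or.inr (Or.inl (disj_subset h)))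
  · exact Or.inl (by simpa using disj_subset h)
  · refine Or.inr (Or.inl ?_)
    have h2 := disj_subset h
    intro x hx
    by_contra hx'
    exact h2 (by simpa using hx') hx
  · refine Or.inr (Or.inr (Or.inr ?_))
    have h2 := disj_subset h
    intro x hx
    by_contra hx'
    exact hx (by simpa using h2 (by simpa using hx'))

lemma compl_ssub {X : Type*} {A B : Set X} : Aᶜ ⊂ B ↔ Bᶜ ⊂ A := by
  constructor
  · intro h
    have h1 := compl_subset_compl.mpr h.1
    rw [compl_compl] at h1
    refine ⟨h1, fun hh => h.2 ?_⟩
    have h2 := compl_subset_compl.mpr hh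
    rwa [compl_compl] at h2
  · intro h
    have h1 := compl_subset_compl.mpr h.1
    rw [compl_compl] at h1
    refine ⟨h1, fun hh => h.2 ?_⟩
    have h2 := compl_subset_compl.mpr hh
    rwa [compl_compl] at h2

/-- No strictly decreasing chain in `𝒞` whose members all contain a fixed
nonempty set. -/
lemma no_chain {X : Type*} {𝒞 : Set (Set X)}
    (hsep : ∀ x y : X, {C | C ∈ 𝒞 ∧ x ∈ C ∧ y ∉ C}.Finite)
    (f : ℕ → Set X) (hf : ∀ n, f n ∈ 𝒞) (hdec : ∀ n, f (n + 1) ⊂ f n)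
    (A : Set X) (hA : A.Nonempty) (hAf : ∀ n, A ⊆ f n) : False := by
  have mono : ∀ n m : ℕ, n ≤ m → f m ⊆ f n := by
    intro n m h
    induction m with
    | zero => simp [Nat.le_zero.mp h]
    | succ k ih =>
      rcases Nat.lt_or_ge n (k+1) with h' | h'
      · exact ((hdec k).1).trans (ih (Nat.lt_succ_iff.mp h'))
      · have : n = k + 1 := le_antisymm h h'
        simp [this]
  have strict : ∀ n m : ℕ, n < m → f m ⊂ f n := by
    intro n m h
    exact (mono (n+1) m h).trans_ssubset (hdec n)
  obtain ⟨x, hx⟩ := hA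
  obtain ⟨y, hy0, hy1⟩ := exists_of_ssubset (hdec 0)
  have hinj : Function.Injective (fun n => f (n + 1)) := by
    intro n m hnm
    by_contra hne
    rcases Nat.lt_or_ge n m with h | h
    · exact (strict (n+1) (m+1) (by omega)).2 (le_of_eq hnm)
    · have hlt : m < n := by omega
      exact (strict (m+1) (n+1) (by omega)).2 (le_of_eq hnm.symm)
  have hmem : ∀ n, f (n + 1) ∈ {C | C ∈ 𝒞 ∧ x ∈ C ∧ y ∉ C} := by
    intro n
    refine ⟨hf _, hAf _ hx, fun hyn => hy1 ?_⟩
    exact (mono 1 (n+1) (by omega)) hyn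
  exact (hsep x y).not_infinite (Set.infinite_of_injective_forall_mem hinj hmem)

lemma uC_isVertex {X : Type*} {𝒞 : Set (Set X)} (h𝒞 : Treeset 𝒞)
    {C : Set X} (hC : C ∈ 𝒞) : IsVertex 𝒞 (uC 𝒞 C) := by
  obtain ⟨hprop, hN, hcompl, hsep⟩ := h𝒞
  obtain ⟨hCne, hCuniv⟩ := hprop C hC
  have hCcne : Cᶜ.Nonempty := Set.nonempty_compl.mpr hCuniv
  have hCcC : ¬ Cᶜ ⊆ C := by
    intro h
    apply hCuniv
    ext x; simp only [mem_univ, iff_true]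
    by_contra hx
    exact hx (h hx)
  refine ⟨fun D hD => hD.1, ?_, ?_, ?_⟩
  · -- U1
    intro D hD
    obtain ⟨hDne, hDuniv⟩ := hprop D hD
    have hDc : Dᶜ ∈ 𝒞 := hcompl D hD
    -- membership characterizations
    have memD : D ∈ uC 𝒞 C ↔ (C ⊆ D ∨ Cᶜ ⊂ D) := by
      simp [uC, hD]
    have memDc : Dᶜ ∈ uC 𝒞 C ↔ (C ⊆ Dᶜ ∨ D ⊂ C) := by
      simp only [uC, mem_setOf_eq, hDc, true_and]
      constructor
      · rintro (h | h)
        · exact Or.inl h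
        · have h3 := compl_ssub.mp h
          rw [compl_compl] at h3
          exact Or.inr h3
      · rintro (h | h)
        · exact Or.inl h
        · exact Or.inr (compl_ssub.mpr (by rwa [compl_compl]))
    have notboth : ¬ ((C ⊆ D ∨ Cᶜ ⊂ D) ∧ (C ⊆ Dᶜ ∨ D ⊂ C)) := by
      rintro ⟨h1 | h1, h2 | h2⟩
      · obtain ⟨x, hx⟩ := hCne
        exact (h2 hx) (h1 hx)
      · exact h2.2 h1
      · have : D ⊆ Cᶜ := by
          intro x hx
          intro hxC
          exact h2 hxC hx
        exact h1.2 this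
      · exact hCcC (h1.1.trans h2.1)
    have atleast : (C ⊆ D ∨ Cᶜ ⊂ D) ∨ (C ⊆ Dᶜ ∨ D ⊂ C) := by
      rcases nested_cases hN hC hD with h | h | h | h
      · exact Or.inl (Or.inl h)
      · rcases eq_or_ne D C with rfl | hne
        · exact Or.inl (Or.inl subset_rfl)
        · exact Or.inr (Or.inr ⟨h, fun hh => hne (le_antisymm h hh)⟩)
      · exact Or.inr (Or.inl h)
      · have h' : Cᶜ ⊆ D := by
          intro x hx
          by_contra hxD
          exact hx (h hxD)
        rcases eq_or_ne Cᶜ D with heq | hne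
        · exact Or.inr (Or.inl (by rw [← heq, compl_compl]))
        · exact Or.inl (Or.inr ⟨h', fun hh => hne (le_antisymm h' hh)⟩)
    rcases atleast with h | h
    · exact Or.inl ⟨memD.mpr h, fun hc => notboth ⟨h, memDc.mp hc⟩⟩
    · exact Or.inr ⟨memDc.mpr h, fun hc => notboth ⟨memD.mp hc, h⟩⟩
  · -- U2
    rintro D ⟨hD, hD2⟩ E hE hDE
    refine ⟨hE, ?_⟩
    rcases hD2 with h | h
    · exact Or.inl (h.trans hDE)
    · exact Or.inr (h.trans_subset hDE)
  · -- U3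
    rintro ⟨f, hf, hdec⟩
    have hf𝒞 : ∀ n, f n ∈ 𝒞 := fun n => (hf n).1
    by_cases hall : ∀ n, C ⊆ f n
    · exact no_chain hsep f hf𝒞 hdec C hCne hall
    · push_neg at hall
      obtain ⟨N, hN'⟩ := hall
      have mono : ∀ n m : ℕ, n ≤ m → f m ⊆ f n := by
        intro n m h
        induction m with
        | zero => simp [Nat.le_zero.mp h]
        | succ k ih =>
          rcases Nat.lt_or_ge n (k+1) with h' | h'
          · exact ((hdec k).1).trans (ih (Nat.lt_succ_iff.mp h'))
          · have : n = k + 1 := le_antisymm h h'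
            simp [this]
      have hcc : ∀ n, Cᶜ ⊆ f (N + n) := by
        intro n
        rcases (hf (N + n)).2 with h | h
        · exact absurd (h.trans (mono N (N+n) (by omega))) hN'
        · exact h.1
      exact no_chain hsep (fun n => f (N + n)) (fun n => hf𝒞 _)
        (fun n => hdec (N + n)) Cᶜ hCcne hcc

lemma uC_mem {X : Type*} {𝒞 : Set (Set X)} {C : Set X} (hC : C ∈ 𝒞) :
    C ∈ uC 𝒞 C := ⟨hC, Or.inl subset_rfl⟩

lemma uC_min {X : Type*} {𝒞 : Set (Set X)} (h𝒞 : Treeset 𝒞) {C : Set X}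
    (hC : C ∈ 𝒞) : ∀ D ∈ uC 𝒞 C, D ⊆ C → D = C := by
  rintro D ⟨hD, h2⟩ hDC
  rcases h2 with h | h
  · exact le_antisymm hDC h
  · exfalso
    have hCuniv := (h𝒞.1 C hC).2
    apply hCuniv
    ext x; simp only [mem_univ, iff_true]
    by_contra hx
    exact hx (hDC (h.1 hx))

/-- Uniqueness: any vertex in which `C` is minimal equals `uC 𝒞 C`. -/
lemma uC_uniq {X : Type*} {𝒞 : Set (Set X)} (h𝒞 : Treeset 𝒞) {C : Set X}
    (hC : C ∈ 𝒞) {v : Set (Set X)} (hv : IsVertex 𝒞 v) (hCv : C ∈ v)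
    (hmin : ∀ D ∈ v, D ⊆ C → D = C) : v = uC 𝒞 C := by
  obtain ⟨hv𝒞, hU1, hU2, _⟩ := hv
  have hsub : uC 𝒞 C ⊆ v := by
    rintro D ⟨hD, h2⟩
    rcases h2 with h | h
    · exact hU2 C hCv D hD h
    · -- Cᶜ ⊂ D, so Dᶜ ⊂ C ; if Dᶜ ∈ v then minimality forces Dᶜ = C, contra
      have hDcC : Dᶜ ⊂ C := compl_ssub.mp h
      rcases hU1 D hD with ⟨hDv, _⟩ | ⟨hDcv, _⟩
      · exact hDv
      · exact absurd (le_of_eq (hmin Dᶜ hDcv hDcC.1).symm) hDcC.2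
  refine le_antisymm ?_ hsub
  intro D hDv
  have hD : D ∈ 𝒞 := hv𝒞 hDv
  rcases (uC_isVertex h𝒞 hC).2.1 D hD with ⟨h1, _⟩ | ⟨h1, h2⟩
  · exact h1
  · exfalso
    rcases hU1 D hD with ⟨_, hnc⟩ | ⟨_, hnd⟩
    · exact hnc (hsub h1)
    · exact hnd hDv

/-- For every `C ∈ 𝒞` there is a unique edge `(u,v)` of `T_𝒞` with
`u \ v = {C}`; equivalently, a unique vertex `u ∈ V_𝒞` in which `C` is minimal. -/
theorem exists_unique_edge_for_cut {X : Type*} (𝒞 : Set (Set X))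
    (h𝒞 : Treeset 𝒞) (C : Set X) (hC : C ∈ 𝒞) :
    (∃! p : Set (Set X) × Set (Set X),
        IsVertex 𝒞 p.1 ∧ IsVertex 𝒞 p.2 ∧ p.1 \ p.2 = {C}) ∧
    (∃! u : Set (Set X), IsVertex 𝒞 u ∧ C ∈ u ∧ ∀ D ∈ u, D ⊆ C → D = C) := by
  have hCc : Cᶜ ∈ 𝒞 := h𝒞.2.2.1 C hC
  have hCne : C.Nonempty := (h𝒞.1 C hC).1
  have hCuniv : C ≠ univ := (h𝒞.1 C hC).2
  have hCcC : ¬ Cᶜ ⊆ C := by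
    intro h
    apply hCuniv
    ext x; simp only [mem_univ, iff_true]
    by_contra hx
    exact hx (h hx)
  have hdiff : uC 𝒞 C \ uC 𝒞 Cᶜ = {C} := by
    ext D
    simp only [mem_diff, mem_singleton_iff]
    constructor
    · rintro ⟨⟨hD, h1⟩, h2⟩
      have h2a : ¬ Cᶜ ⊆ D := fun hh => h2 ⟨hD, Or.inl hh⟩
      have h2b : ¬ C ⊂ D := fun hh => h2 ⟨hD, Or.inr (by rwa [compl_compl])⟩
      rcases h1 with h | h
      · by_contra hne
        exact h2b ⟨h, fun hh => hne (le_antisymm hh h)⟩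
      · exact absurd h.1 h2a
    · rintro rfl
      refine ⟨uC_mem hC, ?_⟩
      rintro ⟨-, h | h⟩
      · exact hCcC h
      · rw [compl_compl] at h
        exact h.2 subset_rfl
  constructor
  · -- unique edge
    refine ⟨(uC 𝒞 C, uC 𝒞 Cᶜ), ⟨uC_isVertex h𝒞 hC, uC_isVertex h𝒞 hCc, hdiff⟩, ?_⟩
    rintro ⟨u', v'⟩ ⟨hu', hv', hdiff'⟩
    simp only at hdiff' ⊢
    have hCmem : C ∈ u' \ v' := by rw [hdiff']; exact rfl
    have hCu' : C ∈ u' := hCmem.1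
    have hCnv' : C ∉ v' := hCmem.2
    have hCcv' : Cᶜ ∈ v' := by
      rcases hv'.2.1 C hC with ⟨h, _⟩ | ⟨h, _⟩
      · exact absurd h hCnv'
      · exact h
    -- C is minimal in u'
    have hmin : ∀ D ∈ u', D ⊆ C → D = C := by
      intro D hDu' hDC
      by_contra hne
      have hDnv' : D ∈ v' := by
        by_contra hDv'
        have : D ∈ u' \ v' := ⟨hDu', hDv'⟩
        rw [hdiff'] at this
        exact hne this
      have hD : D ∈ 𝒞 := hu'.1 hDu'
      have hDcv' : Dᶜ ∈ v' :=
        hv'.2.2.1 Cᶜ hCcv' Dᶜ (h𝒞.2.2.1 D hD) (compl_subset_compl.mpr hDC)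
      rcases hv'.2.1 D hD with ⟨_, h⟩ | ⟨_, h⟩
      · exact h hDcv'
      · exact h hDnv'
    have hu'eq : u' = uC 𝒞 C := uC_uniq h𝒞 hC hu' hCu' hmin
    -- Cᶜ is minimal in v'
    have hminc : ∀ D ∈ v', D ⊆ Cᶜ → D = Cᶜ := by
      intro D hDv' hDCc
      have hD : D ∈ 𝒞 := hv'.1 hDv'
      have hDc : Dᶜ ∈ 𝒞 := h𝒞.2.2.1 D hD
      have hCDc : C ⊆ Dᶜ := by
        intro x hx hxD
        exact hDCc hxD hx
      have hDcu' : Dᶜ ∈ u' := hu'.2.2.1 C hCu' Dᶜ hDc hCDc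
      have hDcnv' : Dᶜ ∉ v' := by
        rcases hv'.2.1 D hD with ⟨_, h⟩ | ⟨_, h⟩
        · exact h
        · exact absurd hDv' h
      have hmem2 : Dᶜ ∈ u' \ v' := ⟨hDcu', hDcnv'⟩
      rw [hdiff'] at hmem2
      have hDceq : Dᶜ = C := hmem2
      rw [← hDceq, compl_compl]
    have hv'eq : v' = uC 𝒞 Cᶜ := uC_uniq h𝒞 hCc hv' hCcv' hminc
    exact Prod.ext hu'eq hv'eq
  · -- unique minimal vertex
    exact ⟨uC 𝒞 C, ⟨uC_isVertex h𝒞 hC, uC_mem hC, uC_min h𝒞 hC⟩,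
      fun v ⟨hv, hCv, hmin⟩ => uC_uniq h𝒞 hC hv hCv hmin⟩
end

section
/- Let 𝒞 be a treeset on a set X. Then the graph (V_𝒞, T_𝒞) is a tree, i.e., it is connected and acyclic. -/
open Set

/-- A *walk* of length `n` in the (directed presentation of the) edge set `E`. -/
def IsWalk {α : Type*} (E : Set (α × α)) (f : ℕ → α) (n : ℕ) : Prop :=
  ∀ i < n, (f i, f (i + 1)) ∈ E

/-- Two points are joined by an `E`-path. -/
def Reach {α : Type*} (E : Set (α × α)) (x y : α) : Prop :=
  ∃ (n : ℕ) (f : ℕ → α), f 0 = x ∧ f n = y ∧ IsWalk E f n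

/-- The extended path metric `d_E` of a graph, with values in `ℕ∞` (`∞` if no path exists). -/
noncomputable def graphDist {α : Type*} (E : Set (α × α)) (x y : α) : ℕ∞ :=
  sInf {d : ℕ∞ | ∃ (n : ℕ) (f : ℕ → α), d = (n : ℕ∞) ∧ f 0 = x ∧ f n = y ∧ IsWalk E f n}

/-- A graph is *acyclic* if it has no injective cycle (of length at least 3,
i.e. not doubling back along a single edge). -/
def Acyclic {α : Type*} (E : Set (α × α)) : Prop :=
  ¬ ∃ (f : ℕ → α) (n : ℕ), 3 ≤ n ∧ IsWalk E f n ∧ f n = f 0 ∧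
      ∀ i j, i < n → j < n → f i = f j → i = j

/-- The edge set `T_𝒞` of the structure tree on `V_𝒞`. -/
def TEdges {X : Type*} (𝒞 : Set (Set X)) : Set (Set (Set X) × Set (Set X)) :=
  {p | IsVertex 𝒞 p.1 ∧ IsVertex 𝒞 p.2 ∧ ∃ C, p.1 \ p.2 = {C}}

/-! An edge of `T_𝒞` leaves a vertex `u` by replacing one `C ∈ u` with `Cᶜ`, and this is possible
exactly when `C` is minimal in `u` (`flipAt`). For vertices `u`, `v` the set `u \ v` is a chain
by nestedness, without infinite descending chains by (U3) for `u` and without infinite ascending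
chains by (U3) for `v` (through complements), hence finite; flipping a minimal element of `u \ v`
shrinks it, which gives connectedness. Along a walk that never backtracks, nestedness forces the
flipped sets to increase strictly, so a walk can never close up into a cycle. -/

namespace Set

variable {α : Type*}

theorem isWF_iff_not_exists_seq_succ_lt [Preorder α] {s : Set α} :
    s.IsWF ↔ ¬ ∃ f : ℕ → α, (∀ n, f n ∈ s) ∧ ∀ n, f (n + 1) < f n := by
  rw [isWF_iff_no_descending_seq]
  refine ⟨fun h ⟨f, hfs, hf⟩ ↦ h f (strictAnti_nat_of_succ_lt hf) hfs,
    fun h f hf hfs ↦ h ⟨f, hfs, fun n ↦ hf n.lt_succ_self⟩⟩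

theorem finite_of_isChain_of_isWF [PartialOrder α] {s : Set α} (hc : IsChain (· ≤ ·) s)
    (hlt : s.IsWF) (hgt : s.WellFoundedOn (· > ·)) : s.Finite := by
  classical
  let := hc.linearOrder
  have : WellFoundedLT s := ⟨hlt⟩
  have : WellFoundedGT s := ⟨hgt⟩
  exact Set.finite_coe_iff.mp (Finite.of_wellFoundedLT_wellFoundedGT s)

end Set

theorem Nested.subset_or_subset {X : Type*} {𝒞 : Set (Set X)} (h : Nested 𝒞) {C D : Set X}
    (hC : C ∈ 𝒞) (hD : D ∈ 𝒞) (hCD : (C ∩ D).Nonempty) (hCD' : (Cᶜ ∩ Dᶜ).Nonempty) :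
    C ⊆ D ∨ D ⊆ C := by
  rcases h C hC D hD with h | h | h | h
  · exact absurd h hCD.ne_empty
  · exact Or.inl (Set.sdiff_eq_empty.mp h)
  · rw [Set.inter_comm] at h
    exact Or.inr (Set.sdiff_eq_empty.mp h)
  · exact absurd h hCD'.ne_empty

section Graph

variable {α : Type*} {E : Set (α × α)}

theorem Reach.refl (x : α) : Reach E x x :=
  ⟨0, fun _ ↦ x, rfl, rfl, fun _ h ↦ absurd h (Nat.not_lt_zero _)⟩

theorem Reach.cons {x y z : α} (hxy : (x, y) ∈ E) (hyz : Reach E y z) : Reach E x z := by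
  obtain ⟨n, f, hf0, hfn, hf⟩ := hyz
  refine ⟨n + 1, fun | 0 => x | i + 1 => f i, rfl, hfn, ?_⟩
  rintro (_ | i) hi
  · simpa [hf0] using hxy
  · exact hf i (by omega)

theorem acyclic_of_periodic_walk_backtracks
    (h : ∀ (g : ℕ → α) (n : ℕ), 0 < n → Function.Periodic g n →
      (∀ i, (g i, g (i + 1)) ∈ E) → ∃ i, g (i + 2) = g i) :
    Acyclic E := by
  rintro ⟨f, n, hn, hf, hcyc, hinj⟩
  have hn0 : 0 < n := by omega
  have hmod : ∀ k ≤ n, f (k % n) = f k := by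
    intro k hk
    rcases hk.lt_or_eq with hk | rfl
    · rw [Nat.mod_eq_of_lt hk]
    · rw [Nat.mod_self, hcyc]
  obtain ⟨i, hi⟩ := h (fun i ↦ f (i % n)) n hn0 (fun i ↦ by simp) fun i ↦ by
    have hi := Nat.mod_lt i hn0
    rw [← Nat.mod_add_mod i n 1, hmod (i % n + 1) hi]
    exact hf _ hi
  have : i + 2 ≡ i [MOD n] := hinj _ _ (Nat.mod_lt _ hn0) (Nat.mod_lt _ hn0) hi
  have h2 : n ∣ 2 := by simpa using (Nat.modEq_iff_dvd' (by omega)).mp this.symm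
  have := Nat.le_of_dvd (by norm_num) h2
  omega

end Graph

namespace IsVertex

variable {X : Type*} {𝒞 : Set (Set X)} {u v w : Set (Set X)} {C D : Set X}

theorem mem_of_subset (hu : IsVertex 𝒞 u) (hC : C ∈ u) (hD : D ∈ 𝒞) (hCD : C ⊆ D) : D ∈ u :=
  hu.2.2.1 C hC D hD hCD

theorem compl_mem_iff (hu : IsVertex 𝒞 u) (hC : C ∈ 𝒞) : Cᶜ ∈ u ↔ C ∉ u :=
  (xor_iff_not_iff'.mp (hu.2.1 C hC)).symm

theorem compl_notMem (hu : IsVertex 𝒞 u) (hC : C ∈ u) : Cᶜ ∉ u :=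
  fun h ↦ (hu.compl_mem_iff (hu.1 hC)).mp h hC

theorem isWF (hu : IsVertex 𝒞 u) : u.IsWF :=
  Set.isWF_iff_not_exists_seq_succ_lt.mpr hu.2.2.2

theorem inter_nonempty (h𝒞 : Treeset 𝒞) (hu : IsVertex 𝒞 u) (hC : C ∈ u) (hD : D ∈ u) :
    (C ∩ D).Nonempty := by
  rw [← Set.not_disjoint_iff_nonempty_inter, ← Set.subset_compl_iff_disjoint_right]
  exact fun hCD ↦ hu.compl_notMem hD (hu.mem_of_subset hC (h𝒞.2.2.1 D (hu.1 hD)) hCD)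

theorem sdiff_nonempty (hu : IsVertex 𝒞 u) (hv : IsVertex 𝒞 v) (huv : u ≠ v) :
    (u \ v).Nonempty := by
  rw [Set.nonempty_iff_ne_empty, Ne, Set.sdiff_eq_empty]
  refine fun huv' ↦ huv (huv'.antisymm fun D hD ↦ ?_)
  by_contra hDu
  exact hv.compl_notMem hD (huv' ((hu.compl_mem_iff (hv.1 hD)).mpr hDu))

theorem sdiff_eq_compl_of_sdiff_eq (hu : IsVertex 𝒞 u) (hw : IsVertex 𝒞 w) (h : u \ w = {C}) :
    w \ u = {Cᶜ} := by
  have hC : C ∈ u \ w := h ▸ rfl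
  ext D
  refine ⟨fun ⟨hDw, hDu⟩ ↦ ?_, ?_⟩
  · have : Dᶜ ∈ u \ w := ⟨(hu.compl_mem_iff (hw.1 hDw)).mpr hDu, hw.compl_notMem hDw⟩
    rw [h, Set.mem_singleton_iff] at this
    rw [Set.mem_singleton_iff, ← this, compl_compl]
  · rintro rfl
    exact ⟨(hw.compl_mem_iff (hu.1 hC.1)).mpr hC.2, hu.compl_notMem hC.1⟩

theorem isChain_sdiff (h𝒞 : Treeset 𝒞) (hu : IsVertex 𝒞 u) (hv : IsVertex 𝒞 v) :
    IsChain (· ≤ ·) (u \ v) := by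
  intro C hC D hD _
  refine h𝒞.2.1.subset_or_subset (hu.1 hC.1) (hu.1 hD.1) (hu.inter_nonempty h𝒞 hC.1 hD.1) ?_
  exact hv.inter_nonempty h𝒞 ((hv.compl_mem_iff (hu.1 hC.1)).mpr hC.2)
    ((hv.compl_mem_iff (hu.1 hD.1)).mpr hD.2)

theorem finite_sdiff (h𝒞 : Treeset 𝒞) (hu : IsVertex 𝒞 u) (hv : IsVertex 𝒞 v) :
    (u \ v).Finite := by
  refine Set.finite_of_isChain_of_isWF (hu.isChain_sdiff h𝒞 hv) (hu.isWF.mono sdiff_subset) ?_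
  have hcompl : compl '' (u \ v) ⊆ v := by
    rintro _ ⟨D, hD, rfl⟩
    exact (hv.compl_mem_iff (hu.1 hD.1)).mpr hD.2
  refine (Set.wellFoundedOn_image.mp (hv.isWF.mono hcompl)).mono (fun C D h ↦ ?_) subset_rfl
  exact compl_lt_compl_iff_lt.mpr h

end IsVertex

section Flip

variable {X : Type*} {𝒞 : Set (Set X)} {u w : Set (Set X)} {C D : Set X}

def flipAt (u : Set (Set X)) (C : Set X) : Set (Set X) :=
  insert Cᶜ (u \ {C})

theorem mem_flipAt : D ∈ flipAt u C ↔ D = Cᶜ ∨ D ∈ u ∧ D ≠ C :=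
  Iff.rfl

theorem isVertex_flipAt (h𝒞 : Treeset 𝒞) (hu : IsVertex 𝒞 u) (hC : Minimal (· ∈ u) C) :
    IsVertex 𝒞 (flipAt u C) := by
  refine ⟨?_, fun D hD ↦ ?_, fun D hD E hE hDE ↦ ?_,
    Set.isWF_iff_not_exists_seq_succ_lt.mp ((hu.isWF.mono sdiff_subset).insert _)⟩
  · rintro D (rfl | ⟨hD, -⟩)
    exacts [h𝒞.2.2.1 C (hu.1 hC.1), hu.1 hD]
  · have hDc := hu.compl_mem_iff hD
    refine xor_iff_not_iff'.mpr ?_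
    simp only [mem_flipAt, compl_inj_iff]
    grind
  · rw [mem_flipAt] at hD ⊢
    rcases hD with rfl | ⟨hD, hDC⟩
    · by_cases hEc : Eᶜ ∈ u
      · exact Or.inl (eq_compl_comm.mp (hC.eq_of_ge hEc (Set.compl_subset_comm.mp hDE)))
      · refine Or.inr ⟨not_not.mp ((hu.compl_mem_iff hE).not.mp hEc), ?_⟩
        intro hEC
        obtain ⟨x, hx⟩ := Set.nonempty_compl.mpr (h𝒞.1 C (hu.1 hC.1)).2
        exact hx (hEC ▸ hDE hx)
    · exact Or.inr ⟨hu.mem_of_subset hD hE hDE, fun hEC ↦ hDC (hC.eq_of_le hD (hEC ▸ hDE))⟩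

theorem IsVertex.sdiff_flipAt (hu : IsVertex 𝒞 u) (hC : C ∈ u) : u \ flipAt u C = {C} := by
  have hCc : Cᶜ ∉ u := hu.compl_notMem hC
  ext D
  simp only [Set.mem_sdiff, mem_flipAt, Set.mem_singleton_iff]
  grind

theorem IsVertex.eq_flipAt_of_sdiff_eq (hu : IsVertex 𝒞 u) (hw : IsVertex 𝒞 w)
    (h : u \ w = {C}) : w = flipAt u C := by
  have hwu := hu.sdiff_eq_compl_of_sdiff_eq hw h
  ext D
  rw [Set.ext_iff] at h hwu
  simp only [Set.mem_sdiff, Set.mem_singleton_iff] at h hwu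
  rw [mem_flipAt]
  grind

theorem IsVertex.mk_mem_tEdges_flipAt (h𝒞 : Treeset 𝒞) (hu : IsVertex 𝒞 u)
    (hC : Minimal (· ∈ u) C) : (u, flipAt u C) ∈ TEdges 𝒞 :=
  ⟨hu, isVertex_flipAt h𝒞 hu hC, C, hu.sdiff_flipAt hC.1⟩

end Flip

section StructureTree

variable {X : Type*} {𝒞 : Set (Set X)} {u v w z : Set (Set X)} {C D : Set X}

theorem exists_mem_tEdges_sdiff_ssubset (h𝒞 : Treeset 𝒞) (hu : IsVertex 𝒞 u)
    (hv : IsVertex 𝒞 v) (huv : u ≠ v) : ∃ w, (u, w) ∈ TEdges 𝒞 ∧ w \ v ⊂ u \ v := by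
  obtain ⟨C, hC⟩ := (hu.finite_sdiff h𝒞 hv).exists_minimal (hu.sdiff_nonempty hv huv)
  -- `C` is even minimal in `u`: anything below it in `v` would put `C` in `v` by upward closure
  have hCu : Minimal (· ∈ u) C :=
    ⟨hC.1.1, fun D hD hDC ↦ hC.2 ⟨hD, fun hDv ↦ hC.1.2 (hv.mem_of_subset hDv (hu.1 hC.1.1) hDC)⟩ hDC⟩
  have hCcv : Cᶜ ∈ v := (hv.compl_mem_iff (hu.1 hC.1.1)).mpr hC.1.2
  refine ⟨flipAt u C, hu.mk_mem_tEdges_flipAt h𝒞 hCu, ?_⟩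
  refine (Set.ssubset_iff_of_subset ?_).mpr ⟨C, hC.1, fun h ↦ ?_⟩
  · rintro D ⟨rfl | ⟨hDu, -⟩, hDv⟩
    exacts [absurd hCcv hDv, ⟨hDu, hDv⟩]
  · have hC' : C ∈ u \ flipAt u C := by rw [hu.sdiff_flipAt hC.1.1]; rfl
    exact hC'.2 h.1

theorem reach_tEdges (h𝒞 : Treeset 𝒞) (hu : IsVertex 𝒞 u) (hv : IsVertex 𝒞 v) :
    Reach (TEdges 𝒞) u v := by
  induction hk : (u \ v).ncard using Nat.strong_induction_on generalizing u with
  | _ k ih =>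
  by_cases huv : u = v
  · exact huv ▸ Reach.refl u
  obtain ⟨w, huw, hwv⟩ := exists_mem_tEdges_sdiff_ssubset h𝒞 hu hv huv
  exact Reach.cons huw (ih _ (hk ▸ Set.ncard_lt_ncard hwv (hu.finite_sdiff h𝒞 hv)) huw.2.1 rfl)

theorem ssubset_of_mem_tEdges (h𝒞 : Treeset 𝒞) (huw : (u, w) ∈ TEdges 𝒞)
    (hwz : (w, z) ∈ TEdges 𝒞) (hzu : z ≠ u) (hC : u \ w = {C}) (hD : w \ z = {D}) : C ⊂ D := by
  have hu : IsVertex 𝒞 u := huw.1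
  have hw : IsVertex 𝒞 w := huw.2.1
  have hz : IsVertex 𝒞 z := hwz.2.1
  have hwu := hu.sdiff_eq_compl_of_sdiff_eq hw hC
  have hDCc : D ≠ Cᶜ := by
    rintro rfl
    exact hzu (by rw [hw.eq_flipAt_of_sdiff_eq hz hD, hw.eq_flipAt_of_sdiff_eq hu hwu])
  obtain ⟨⟨hCu, hCw⟩, -⟩ := Set.eq_singleton_iff_unique_mem.mp hC
  obtain ⟨⟨hDw, hDz⟩, hD_unique⟩ := Set.eq_singleton_iff_unique_mem.mp hD
  obtain ⟨⟨hCcw, -⟩, hCc_unique⟩ := Set.eq_singleton_iff_unique_mem.mp hwu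
  have hDu : D ∈ u := by_contra fun h ↦ hDCc (hCc_unique D ⟨hDw, h⟩)
  have hCcz : Cᶜ ∈ z := by_contra fun h ↦ hDCc (hD_unique Cᶜ ⟨hCcw, h⟩).symm
  have hDcz : Dᶜ ∈ z := (hz.compl_mem_iff (hw.1 hDw)).mpr hDz
  rcases h𝒞.2.1.subset_or_subset (hu.1 hCu) (hu.1 hDu) (hu.inter_nonempty h𝒞 hCu hDu)
    (hz.inter_nonempty h𝒞 hCcz hDcz) with hCD | hDC
  · exact hCD.ssubset_of_ne fun h ↦ hCw (h ▸ hDw)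
  · refine absurd ?_ (hw.inter_nonempty h𝒞 hCcw hDw).ne_empty
    rw [Set.inter_comm]
    exact Set.sdiff_eq_empty.mpr hDC

theorem acyclic_tEdges (h𝒞 : Treeset 𝒞) : Acyclic (TEdges 𝒞) := by
  refine acyclic_of_periodic_walk_backtracks fun g n hn hper hg ↦ ?_
  by_contra! hback
  have hlabel : ∀ i, ∃ C, g i \ g (i + 1) = {C} := fun i ↦ (hg i).2.2
  choose L hL using hlabel
  have hmono : StrictMono L := strictMono_nat_of_lt_succ fun i ↦
    ssubset_of_mem_tEdges h𝒞 (hg i) (hg (i + 1)) (hback i) (hL i) (hL (i + 1))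
  have hLn : L n = L 0 := by
    have h0 : g n = g 0 := by simpa using hper 0
    have h1 : g (n + 1) = g 1 := by simpa [add_comm] using hper 1
    exact Set.singleton_injective (by rw [← hL n, ← hL 0, h0, h1])
  exact (hmono hn).ne' hLn

end StructureTree

/-- The graph `(V_𝒞, T_𝒞)` associated with a treeset `𝒞` is a tree:
any two vertices are joined by a `T_𝒞`-path, and `T_𝒞` is acyclic. -/
theorem structureTree_isTree {X : Type*} (𝒞 : Set (Set X)) (h𝒞 : Treeset 𝒞) :
    (∀ u v : Set (Set X), IsVertex 𝒞 u → IsVertex 𝒞 v →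
      ∃ (n : ℕ) (f : ℕ → Set (Set X)), f 0 = u ∧ f n = v ∧ IsWalk (TEdges 𝒞) f n) ∧
    Acyclic (TEdges 𝒞) :=
  ⟨fun _ _ hu hv ↦ reach_tEdges h𝒞 hu hv, acyclic_tEdges h𝒞⟩
end

section
/- Let (X,G) be a connected graph and 𝒞 a treeset on X such that for every edge (x,y) ∈ G, |{C ∈ 𝒞 : x ∈ C, y ∉ C}| ≤ 1. Define ρ(x) = {C ∈ 𝒞 : x ∈ C}. Then ρ : (X,G) → (V_𝒞, T_𝒞) is a 1-surjective simplicial map, i.e., T_𝒞 ⊆ (ρ×ρ)(G) ⊆ Δ_{V_𝒞} ∪ T_𝒞, where Δ_{V_𝒞} is the diagonal of V_𝒞 × V_𝒞. -/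
open Set

lemma rho_isVertex {X : Type*} {𝒞 : Set (Set X)} (h𝒞 : Treeset 𝒞) (x : X) :
    IsVertex 𝒞 {C | C ∈ 𝒞 ∧ x ∈ C} := by
  obtain ⟨hprop, hnest, hcompl, hfin⟩ := h𝒞
  refine ⟨fun C hC => hC.1, ?_, ?_, ?_⟩
  · intro C hC
    by_cases hx : x ∈ C
    · exact Or.inl ⟨⟨hC, hx⟩, fun h => h.2 hx⟩
    · exact Or.inr ⟨⟨hcompl C hC, hx⟩, fun h => hx h.2⟩
  · intro C hC D hD hsub
    exact ⟨hD, hsub hC.2⟩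
  · rintro ⟨f, hmem, hdec⟩
    obtain ⟨y, hy0, hy1⟩ := exists_of_ssubset (hdec 0)
    have hanti : StrictAnti f := strictAnti_nat_of_succ_lt fun n => hdec n
    have hsub1 : ∀ n, f (n + 1) ⊆ f 1 := by
      intro n
      induction n with
      | zero => exact subset_rfl
      | succ k ih => exact (hdec (k + 1)).subset.trans ih
    have hinj : Function.Injective (fun n => f (n + 1)) :=
      hanti.injective.comp fun a b h => Nat.succ_injective h
    have hinf : {C | C ∈ 𝒞 ∧ x ∈ C ∧ y ∉ C}.Infinite :=
      Set.infinite_of_injective_forall_mem hinj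
        (fun n => ⟨(hmem (n + 1)).1, (hmem (n + 1)).2, fun h => hy1 (hsub1 n h)⟩)
    exact hinf (hfin x y)

lemma exists_crossing {X : Type*} {G : Set (X × X)}
    (hconn : ∀ x y : X, ∃ (n : ℕ) (f : ℕ → X), f 0 = x ∧ f n = y ∧ IsWalk G f n)
    {C : Set X} (h1 : C.Nonempty) (h2 : Cᶜ.Nonempty) :
    ∃ a b, (a, b) ∈ G ∧ a ∉ C ∧ b ∈ C := by
  classical
  obtain ⟨x₀, hx₀⟩ := h1
  obtain ⟨y₀, hy₀⟩ := h2
  obtain ⟨n, f, hf0, hfn, hw⟩ := hconn y₀ x₀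
  have hex : ∃ i, i ≤ n ∧ f i ∈ C := ⟨n, le_refl n, hfn ▸ hx₀⟩
  have hm := Nat.find_spec hex
  set m := Nat.find hex with hmdef
  have hm0 : m ≠ 0 := by
    intro h
    rw [h] at hm
    rw [hf0] at hm
    exact hy₀ hm.2
  have hlt : m - 1 < m := Nat.sub_lt (Nat.pos_of_ne_zero hm0) one_pos
  have hmin := Nat.find_min hex hlt
  have h1' : m - 1 ≤ n := le_trans (Nat.sub_le m 1) hm.1
  have hnot : f (m - 1) ∉ C := fun h => hmin ⟨h1', h⟩
  have hsucc : m - 1 + 1 = m := Nat.succ_pred_eq_of_pos (Nat.pos_of_ne_zero hm0)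
  have hedge : (f (m - 1), f (m - 1 + 1)) ∈ G := hw _ (by omega)
  rw [hsucc] at hedge
  exact ⟨f (m - 1), f m, hedge, hnot, hm.2⟩

lemma rho_eq_vertex {X : Type*} {𝒞 : Set (Set X)} (h𝒞 : Treeset 𝒞)
    {u v : Set (Set X)} (hu : IsVertex 𝒞 u) (hv : IsVertex 𝒞 v)
    {C : Set X} (hC : u \ v = {C}) {a b : X} (ha : a ∉ C) (hb : b ∈ C)
    (key1 : ∀ D ∈ 𝒞, b ∈ D → a ∉ D → D = C)
    (key2 : ∀ D ∈ 𝒞, a ∈ D → b ∉ D → D = Cᶜ) :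
    {D | D ∈ 𝒞 ∧ b ∈ D} = u := by
  have hCuv : C ∈ u \ v := by rw [hC]; exact rfl
  have hCu : C ∈ u := hCuv.1
  have hCv : C ∉ v := hCuv.2
  have hC𝒞 : C ∈ 𝒞 := hu.1 hCu
  have hCc𝒞 : Cᶜ ∈ 𝒞 := h𝒞.2.2.1 C hC𝒞
  have hCcu : Cᶜ ∉ u := by
    rcases hu.2.1 C hC𝒞 with ⟨_, h2⟩ | ⟨_, h2⟩
    · exact h2
    · exact absurd hCu h2
  ext D
  simp only [mem_setOf_eq]
  constructor
  · rintro ⟨hD, hbD⟩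
    by_cases haD : a ∈ D
    · rcases h𝒞.2.1 C hC𝒞 D hD with h | h | h | h
      · exact absurd (h ▸ ⟨hb, hbD⟩ : b ∈ (∅ : Set X)) (fun hh => hh)
      · have hsub : C ⊆ D := by
          intro z hz
          by_contra hz'
          exact (h ▸ ⟨hz, hz'⟩ : z ∈ (∅ : Set X))
        exact hu.2.2.1 C hCu D hD hsub
      · exact absurd (show a ∈ (∅ : Set X) from h ▸ ⟨ha, haD⟩) (fun hh => hh)
      · have hsub : Cᶜ ⊆ D := by
          intro z hz
          by_contra hz'
          exact (h ▸ ⟨hz, hz'⟩ : z ∈ (∅ : Set X))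
        by_contra hDu
        have hDcu : Dᶜ ∈ u := by
          rcases hu.2.1 D hD with ⟨h1, _⟩ | ⟨h1, _⟩
          · exact absurd h1 hDu
          · exact h1
        by_cases hDcv : Dᶜ ∈ v
        · have hsub' : Dᶜ ⊆ C := by
            intro z hz
            by_contra hz'
            exact hz (hsub hz')
          exact hCv (hv.2.2.1 Dᶜ hDcv C hC𝒞 hsub')
        · have : Dᶜ ∈ u \ v := ⟨hDcu, hDcv⟩
          rw [hC, mem_singleton_iff] at this
          have hDe : D = Cᶜ := by rw [← compl_compl D, this]
          rw [hDe] at hbD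
          exact hbD hb
    · exact (key1 D hD hbD haD) ▸ hCu
  · intro hDu
    have hD : D ∈ 𝒞 := hu.1 hDu
    refine ⟨hD, ?_⟩
    by_contra hbD
    by_cases haD : a ∈ D
    · have := key2 D hD haD hbD
      rw [this] at hDu
      exact hCcu hDu
    · rcases h𝒞.2.1 C hC𝒞 D hD with h | h | h | h
      · have hsub : C ⊆ Dᶜ := by
          intro z hz hz'
          exact (h ▸ ⟨hz, hz'⟩ : z ∈ (∅ : Set X))
        have hDcu : Dᶜ ∈ u := hu.2.2.1 C hCu Dᶜ (h𝒞.2.2.1 D hD) hsub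
        rcases hu.2.1 D hD with ⟨_, h2⟩ | ⟨_, h2⟩
        · exact h2 hDcu
        · exact h2 hDu
      · have hsub : C ⊆ D := by
          intro z hz
          by_contra hz'
          exact (h ▸ ⟨hz, hz'⟩ : z ∈ (∅ : Set X))
        exact hbD (hsub hb)
      · have hsub : D ⊆ C := by
          intro z hz
          by_contra hz'
          exact (h ▸ ⟨hz', hz⟩ : z ∈ (∅ : Set X))
        by_cases hDv : D ∈ v
        · exact hCv (hv.2.2.1 D hDv C hC𝒞 hsub)
        · have : D ∈ u \ v := ⟨hDu, hDv⟩
          rw [hC, mem_singleton_iff] at this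
          rw [this] at hbD
          exact hbD hb
      · have hsub : Cᶜ ⊆ D := by
          intro z hz
          by_contra hz'
          exact (h ▸ ⟨hz, hz'⟩ : z ∈ (∅ : Set X))
        exact haD (hsub ha)

/-- If `(X,G)` is a connected graph, `𝒞` a treeset on `X` such that each
edge of `G` is separated by at most one `C ∈ 𝒞`, then `ρ : x ↦ {C ∈ 𝒞 : x ∈ C}` is a
1-surjective simplicial map: `T_𝒞 ⊆ (ρ×ρ)(G) ⊆ Δ_{V_𝒞} ∪ T_𝒞`. -/
theorem rho_one_surjective_simplicial {X : Type*} (G : Set (X × X))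
    (hsym : ∀ p ∈ G, (p.2, p.1) ∈ G) (hirr : ∀ x : X, (x, x) ∉ G)
    (hconn : ∀ x y : X, ∃ (n : ℕ) (f : ℕ → X), f 0 = x ∧ f n = y ∧ IsWalk G f n)
    (𝒞 : Set (Set X)) (h𝒞 : Treeset 𝒞)
    (hsep : ∀ p ∈ G, {C | C ∈ 𝒞 ∧ p.1 ∈ C ∧ p.2 ∉ C}.encard ≤ 1) :
    TEdges 𝒞 ⊆
      (Prod.map (fun x : X => {C | C ∈ 𝒞 ∧ x ∈ C}) (fun x : X => {C | C ∈ 𝒞 ∧ x ∈ C})) '' G ∧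
    (Prod.map (fun x : X => {C | C ∈ 𝒞 ∧ x ∈ C}) (fun x : X => {C | C ∈ 𝒞 ∧ x ∈ C})) '' G ⊆
      {p | p.1 = p.2} ∪ TEdges 𝒞 := by
  constructor
  · rintro ⟨u, v⟩ ⟨hu, hv, C, hC⟩
    have hC' : u \ v = {C} := hC
    have hCuv : C ∈ u \ v := by rw [hC']; exact rfl
    have hC𝒞 : C ∈ 𝒞 := hu.1 hCuv.1
    have hCc𝒞 : Cᶜ ∈ 𝒞 := h𝒞.2.2.1 C hC𝒞
    have hCne : C.Nonempty := (h𝒞.1 C hC𝒞).1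
    have hCcne : Cᶜ.Nonempty := by
      rw [Set.nonempty_compl]
      exact (h𝒞.1 C hC𝒞).2
    obtain ⟨a, b, hab, haC, hbC⟩ := exists_crossing hconn hCne hCcne
    have hba : (b, a) ∈ G := hsym _ hab
    have key1 : ∀ D ∈ 𝒞, b ∈ D → a ∉ D → D = C := by
      intro D hD hbD haD
      exact Set.encard_le_one_iff.mp (hsep (b, a) hba) D C ⟨hD, hbD, haD⟩ ⟨hC𝒞, hbC, haC⟩
    have key2 : ∀ D ∈ 𝒞, a ∈ D → b ∉ D → D = Cᶜ := by
      intro D hD haD hbD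
      exact Set.encard_le_one_iff.mp (hsep (a, b) hab) D Cᶜ ⟨hD, haD, hbD⟩
        ⟨hCc𝒞, haC, fun h => h hbC⟩
    have hCv : C ∉ v := hCuv.2
    have hCcv : Cᶜ ∈ v := by
      rcases hv.2.1 C hC𝒞 with ⟨h1, _⟩ | ⟨h1, _⟩
      · exact absurd h1 hCv
      · exact h1
    have hCcu : Cᶜ ∉ u := by
      rcases hu.2.1 C hC𝒞 with ⟨_, h2⟩ | ⟨_, h2⟩
      · exact h2
      · exact absurd hCuv.1 h2
    have hvu : v \ u = {Cᶜ} := by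
      ext D
      simp only [mem_diff, mem_singleton_iff]
      constructor
      · rintro ⟨hDv, hDu⟩
        have hD : D ∈ 𝒞 := hv.1 hDv
        have hDcu : Dᶜ ∈ u := by
          rcases hu.2.1 D hD with ⟨h1, _⟩ | ⟨h1, _⟩
          · exact absurd h1 hDu
          · exact h1
        have hDcv : Dᶜ ∉ v := by
          rcases hv.2.1 D hD with ⟨_, h2⟩ | ⟨_, h2⟩
          · exact h2
          · exact absurd hDv h2
        have : Dᶜ ∈ u \ v := ⟨hDcu, hDcv⟩
        rw [hC', mem_singleton_iff] at this
        rw [← compl_compl D, this]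
      · rintro rfl
        exact ⟨hCcv, hCcu⟩
    have hb_eq : {D | D ∈ 𝒞 ∧ b ∈ D} = u := rho_eq_vertex h𝒞 hu hv hC' haC hbC key1 key2
    have ha_eq : {D | D ∈ 𝒞 ∧ a ∈ D} = v := by
      have key2' : ∀ D ∈ 𝒞, b ∈ D → a ∉ D → D = Cᶜᶜ := by
        intro D hD h1 h2
        rw [compl_compl]
        exact key1 D hD h1 h2
      exact rho_eq_vertex h𝒞 hv hu hvu (fun h => h hbC) haC key2 key2'
    exact ⟨(b, a), hba, by
      show ({D | D ∈ 𝒞 ∧ b ∈ D}, {D | D ∈ 𝒞 ∧ a ∈ D}) = (u, v)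
      rw [hb_eq, ha_eq]⟩
  · rintro p ⟨⟨x, y⟩, hxy, rfl⟩
    have hS := hsep (x, y) hxy
    by_cases hS0 : {D | D ∈ 𝒞 ∧ x ∈ D ∧ y ∉ D} = ∅
    · left
      show ({D | D ∈ 𝒞 ∧ x ∈ D} : Set (Set X)) = {D | D ∈ 𝒞 ∧ y ∈ D}
      ext D
      simp only [mem_setOf_eq]
      constructor
      · rintro ⟨hD, hxD⟩
        refine ⟨hD, ?_⟩
        by_contra hyD
        exact (eq_empty_iff_forall_notMem.mp hS0 D) ⟨hD, hxD, hyD⟩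
      · rintro ⟨hD, hyD⟩
        refine ⟨hD, ?_⟩
        by_contra hxD
        exact (eq_empty_iff_forall_notMem.mp hS0 Dᶜ) ⟨h𝒞.2.2.1 D hD, hxD, fun h => h hyD⟩
    · right
      obtain ⟨C, hCmem⟩ := Set.nonempty_iff_ne_empty.mpr hS0
      refine ⟨rho_isVertex h𝒞 x, rho_isVertex h𝒞 y, C, ?_⟩
      ext D
      simp only [mem_diff, mem_setOf_eq, mem_singleton_iff]
      constructor
      · rintro ⟨⟨hD, hxD⟩, hnot⟩
        have hyD : y ∉ D := fun h => hnot ⟨hD, h⟩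
        exact Set.encard_le_one_iff.mp hS D C ⟨hD, hxD, hyD⟩ hCmem
      · rintro rfl
        exact ⟨⟨hCmem.1, hCmem.2.1⟩, fun h => hCmem.2.2 h.2⟩
end

section
/- Let (X,G) be a graph with uniformly bounded degrees and 𝒞 a cutset of G with uniformly bounded boundaries, i.e., r := sup_{C∈𝒞} diam_G(∂iv C) < ∞. Then sup_{x∈X} |{C ∈ 𝒞 : x ∈ ∂iv C}| < ∞, i.e., there is N ∈ ℕ such that every vertex x lies in the inner vertex boundary of at most N cuts of 𝒞. -/
open Set

/-- `E` is (the directed presentation of) a graph: symmetric and irreflexive. -/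
def IsGraph {α : Type*} (E : Set (α × α)) : Prop :=
  (∀ p ∈ E, (p.2, p.1) ∈ E) ∧ ∀ x : α, (x, x) ∉ E

/-- `(α, E)` has uniformly bounded degrees. -/
def BddDeg {α : Type*} (E : Set (α × α)) : Prop :=
  ∃ d : ℕ, ∀ x : α, {y | (x, y) ∈ E}.encard ≤ (d : ℕ∞)

/-- The `E_G`-class (connected component) of `x`. -/
def cls {α : Type*} (E : Set (α × α)) (x : α) : Set α := {y | Reach E x y}

/-- The complement `C̄ = ω ∖ C` of `C` inside the `E_G`-class(es) of its points. -/
def cCompl {α : Type*} (E : Set (α × α)) (C : Set α) : Set α :=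
  {y | y ∉ C ∧ ∃ x ∈ C, Reach E x y}

/-- Inner vertex boundary `∂iv C` of a subset `C` of an `E_G`-class. -/
def innerB {α : Type*} (E : Set (α × α)) (C : Set α) : Set α :=
  {x | x ∈ C ∧ ∃ y, y ∉ C ∧ (x, y) ∈ E}

/-- Outer vertex boundary `∂ov C = ∂iv C̄` of a subset `C` of an `E_G`-class. -/
def outerB {α : Type*} (E : Set (α × α)) (C : Set α) : Set α :=
  {y | y ∉ C ∧ ∃ x ∈ C, (y, x) ∈ E}

/-- Outer edge boundary `∂oe C = (C × C̄) ∩ E` of a subset `C` of an `E_G`-class. -/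
def outerEdgeB {α : Type*} (E : Set (α × α)) (C : Set α) : Set (α × α) :=
  {p | p ∈ E ∧ p.1 ∈ C ∧ p.2 ∉ C}

/-- A *cut* of a graph: a nonempty proper subset of an `E_G`-class with finite
edge boundary. -/
def IsCut {α : Type*} (E : Set (α × α)) (C : Set α) : Prop :=
  (∃ x₀, x₀ ∈ C ∧ C ⊆ cls E x₀ ∧ C ≠ cls E x₀) ∧ (outerEdgeB E C).Finite

/-- `diam_E(A)`, with values in `ℕ∞`. -/
noncomputable def gdiam {α : Type*} (E : Set (α × α)) (A : Set α) : ℕ∞ :=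
  ⨆ x ∈ A, ⨆ y ∈ A, graphDist E x y

/-- `C` and `D` lie on the same `E_G`-class. -/
def SameClass {α : Type*} (E : Set (α × α)) (C D : Set α) : Prop :=
  ∃ x ∈ C, ∃ y ∈ D, Reach E x y

/-- `C` and `D` are *nested* with each other (complements taken within the class). -/
def NestedPair {α : Type*} (E : Set (α × α)) (C D : Set α) : Prop :=
  C ∩ D = ∅ ∨ C ∩ cCompl E D = ∅ ∨ cCompl E C ∩ D = ∅ ∨ cCompl E C ∩ cCompl E D = ∅

/-! If `x ∈ ∂iv C`, the diameter bound puts all of `∂iv C` in the ball of radius `r` about `x`,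
so no edge with an endpoint outside the ball `B` of radius `r + 1` crosses `C`. As `C` lies in
the class of `x`, membership in `C` propagates along paths from `x` and is decided by `C ∩ B`.
Hence the cuts with `x` on their inner boundary inject into `𝒫 B`, and with degrees at most `d`
the ball `B` has at most `(d + 1) ^ (r + 1)` points. -/

section

variable {α : Type*} {E : Set (α × α)}

section Walks

lemma IsWalk.exists_append {f g : ℕ → α} {n m : ℕ} (hf : IsWalk E f n) (hg : IsWalk E g m)
    (hfg : f n = g 0) : ∃ h : ℕ → α, h 0 = f 0 ∧ h (n + m) = g m ∧ IsWalk E h (n + m) := by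
  have tail : ∀ i, n ≤ i → (if i ≤ n then f i else g (i - n)) = g (i - n) := by
    intro i hi
    rcases hi.eq_or_lt with rfl | hlt
    · simp [hfg]
    · simp [hlt.not_ge]
  refine ⟨fun i => if i ≤ n then f i else g (i - n), by simp, ?_, fun i hi => ?_⟩
  · dsimp only
    rw [tail _ (Nat.le_add_right n m), Nat.add_sub_cancel_left]
  · dsimp only
    rcases Nat.lt_or_ge i n with hin | hni
    · simpa [hin.le, Nat.succ_le_of_lt hin] using hf i hin
    · rw [tail i hni, tail (i + 1) (by omega), Nat.sub_add_comm hni]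
      exact hg (i - n) (by omega)

lemma IsWalk.exists_snoc {f : ℕ → α} {n : ℕ} {z : α} (hf : IsWalk E f n) (he : (f n, z) ∈ E) :
    ∃ h : ℕ → α, h 0 = f 0 ∧ h (n + 1) = z ∧ IsWalk E h (n + 1) :=
  hf.exists_append (g := fun i => if i = 0 then f n else z) (by simpa [IsWalk] using he) rfl

lemma Reach.trans {x y z : α} (hxy : Reach E x y) (hyz : Reach E y z) : Reach E x z := by
  obtain ⟨n, f, rfl, rfl, hf⟩ := hxy
  obtain ⟨m, g, hg0, rfl, hg⟩ := hyz
  obtain ⟨h, h0, hnm, hh⟩ := hf.exists_append hg hg0.symm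
  exact ⟨n + m, h, h0, hnm, hh⟩

lemma Reach.symm (hE : IsGraph E) {x y : α} (h : Reach E x y) : Reach E y x := by
  obtain ⟨n, f, rfl, rfl, hf⟩ := h
  refine ⟨n, fun i => f (n - i), by simp, by simp, fun i hi => ?_⟩
  have := hE.1 _ (hf (n - (i + 1)) (by omega))
  rwa [show n - (i + 1) + 1 = n - i by omega] at this

lemma Reach.mem_of_forall_edge {P : Set α} (hP : ∀ u v, (u, v) ∈ E → u ∈ P → v ∈ P)
    {x y : α} (h : Reach E x y) (hx : x ∈ P) : y ∈ P := by
  obtain ⟨n, f, rfl, rfl, hf⟩ := h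
  suffices ∀ i ≤ n, f i ∈ P from this n le_rfl
  intro i
  induction i with
  | zero => exact fun _ => hx
  | succ i ih => exact fun hi => hP _ _ (hf i hi) (ih (by omega))

lemma IsCut.reach (hE : IsGraph E) {C : Set α} (hC : IsCut E C) {x y : α} (hx : x ∈ C)
    (hy : y ∈ C) : Reach E x y := by
  obtain ⟨⟨x₀, -, hsub, -⟩, -⟩ := hC
  exact ((hsub hx).symm hE).trans (hsub hy)

end Walks

section Balls

def gball (E : Set (α × α)) (x : α) (k : ℕ) : Set α :=
  {y | ∃ n ≤ k, ∃ f : ℕ → α, f 0 = x ∧ f n = y ∧ IsWalk E f n}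

lemma gball_mono {x : α} {k l : ℕ} (h : k ≤ l) : gball E x k ⊆ gball E x l := by
  rintro y ⟨n, hn, hy⟩
  exact ⟨n, hn.trans h, hy⟩

lemma mem_gball_succ_of_edge {x y z : α} {k : ℕ} (hy : y ∈ gball E x k) (he : (y, z) ∈ E) :
    z ∈ gball E x (k + 1) := by
  obtain ⟨n, hn, f, rfl, rfl, hf⟩ := hy
  obtain ⟨h, h0, hz, hh⟩ := hf.exists_snoc he
  exact ⟨n + 1, by omega, h, h0, hz, hh⟩

lemma mem_gball_of_graphDist_le {x y : α} {k : ℕ} (h : graphDist E x y ≤ k) :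
    y ∈ gball E x k := by
  by_contra hy
  have : ((k + 1 : ℕ) : ℕ∞) ≤ graphDist E x y := by
    refine le_sInf ?_
    rintro _ ⟨n, f, rfl, h0, hn, hf⟩
    exact Nat.cast_le.mpr (not_le.mp fun hnk => hy ⟨n, hnk, f, h0, hn, hf⟩)
  exact absurd (Nat.cast_le.mp (this.trans h)) (by omega)

lemma subset_gball_of_gdiam_le {A : Set α} {x : α} {k : ℕ} (hx : x ∈ A)
    (hA : gdiam E A ≤ k) : A ⊆ gball E x k := fun y hy =>
  mem_gball_of_graphDist_le <|
    (le_iSup₂_of_le x hx <| le_iSup₂ (f := fun y (_ : y ∈ A) => graphDist E x y) y hy).trans hA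

lemma gball_succ_subset_biUnion (x : α) (k : ℕ) :
    gball E x (k + 1) ⊆ ⋃ u ∈ gball E x k, insert u {v | (u, v) ∈ E} := by
  rintro y ⟨n, hn, f, rfl, rfl, hf⟩
  rcases hn.lt_or_eq with hlt | rfl
  · exact mem_biUnion ⟨n, by omega, f, rfl, rfl, hf⟩ (mem_insert _ _)
  · exact mem_biUnion ⟨k, le_rfl, f, rfl, rfl, fun i hi => hf i (by omega)⟩
      (mem_insert_of_mem _ (hf k (by omega)))

lemma encard_biUnion_le_mul {ι : Type*} {s : Set ι} (hs : s.Finite) {t : ι → Set α} {b : ℕ∞}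
    (hb : ∀ i ∈ s, (t i).encard ≤ b) : (⋃ i ∈ s, t i).encard ≤ s.encard * b := by
  calc (⋃ i ∈ s, t i).encard = (⋃ i ∈ hs.toFinset, t i).encard := by simp
    _ ≤ ∑ i ∈ hs.toFinset, (t i).encard := hs.toFinset.set_encard_biUnion_le t
    _ ≤ hs.toFinset.card • b := Finset.sum_le_card_nsmul _ _ _ (by simpa using hb)
    _ = s.encard * b := by rw [nsmul_eq_mul, hs.encard_eq_coe_toFinset_card]

lemma encard_gball_le {d : ℕ} (hd : ∀ u : α, {v | (u, v) ∈ E}.encard ≤ d) (x : α) (k : ℕ) :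
    (gball E x k).encard ≤ ((d + 1) ^ k : ℕ) := by
  induction k with
  | zero =>
    have : gball E x 0 ⊆ {x} := by
      rintro y ⟨n, hn, f, rfl, rfl, -⟩
      obtain rfl := Nat.le_zero.mp hn
      rfl
    simpa using encard_le_encard this
  | succ k ih =>
    calc (gball E x (k + 1)).encard
        ≤ (⋃ u ∈ gball E x k, insert u {v | (u, v) ∈ E}).encard :=
          encard_le_encard (gball_succ_subset_biUnion x k)
      _ ≤ (gball E x k).encard * (d + 1) :=
          encard_biUnion_le_mul (finite_of_encard_le_coe ih)
            fun u _ => (encard_insert_le _ _).trans (add_le_add_left (hd u) 1)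
      _ ≤ ((d + 1) ^ k : ℕ) * (d + 1) := mul_le_mul_left ih _
      _ = ((d + 1) ^ (k + 1) : ℕ) := by push_cast; ring

end Balls

section Cuts

variable {x : α} {r : ℕ}

lemma mem_iff_mem_of_edge_of_notMem_gball (hE : IsGraph E) {C : Set α}
    (hC : innerB E C ⊆ gball E x r) {u v : α} (huv : (u, v) ∈ E)
    (hv : v ∉ gball E x (r + 1)) : u ∈ C ↔ v ∈ C := by
  constructor
  · refine fun hu => by_contra fun hvC => hv ?_
    exact mem_gball_succ_of_edge (hC ⟨hu, v, hvC, huv⟩) huv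
  · refine fun hvC => by_contra fun hu => hv ?_
    exact gball_mono (Nat.le_succ r) (hC ⟨hvC, u, hu, hE.1 _ huv⟩)

lemma subset_of_inter_gball_eq (hE : IsGraph E) {C C' : Set α} (hreach : ∀ y ∈ C, Reach E x y)
    (hxC : x ∈ C) (hxC' : x ∈ C') (hC : innerB E C ⊆ gball E x r)
    (hC' : innerB E C' ⊆ gball E x r)
    (heq : C ∩ gball E x (r + 1) = C' ∩ gball E x (r + 1)) : C ⊆ C' := by
  have agree : ∀ u v, (u, v) ∈ E → (u ∈ C ↔ u ∈ C') → (v ∈ C ↔ v ∈ C') := by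
    intro u v huv hu
    by_cases hv : v ∈ gball E x (r + 1)
    · simpa [hv] using congrArg (v ∈ ·) heq
    · rwa [← mem_iff_mem_of_edge_of_notMem_gball hE hC huv hv,
        ← mem_iff_mem_of_edge_of_notMem_gball hE hC' huv hv]
  exact fun y hy => ((hreach y hy).mem_of_forall_edge (P := {y | y ∈ C ↔ y ∈ C'}) agree
    (iff_of_true hxC hxC')).mp hy

end Cuts

lemma encard_le_two_pow_of_injOn_inter {S : Set (Set α)} {B : Set α} (hB : B.Finite)
    (hS : InjOn (· ∩ B) S) : S.encard ≤ (2 ^ B.ncard : ℕ) := by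
  calc S.encard = ((· ∩ B) '' S).encard := hS.encard_image.symm
    _ ≤ (𝒫 B).encard := encard_le_encard (image_subset_iff.mpr fun _ _ => inter_subset_right)
    _ = (2 ^ B.ncard : ℕ) := by rw [← hB.powerset.cast_ncard_eq, ncard_powerset B hB]

end

/-- For a bounded-degree graph `(X,G)` and a cutset `𝒞` with uniformly
bounded boundaries (`diam_G(∂iv C) ≤ r` for all `C ∈ 𝒞`), every vertex lies in the inner
vertex boundary of a uniformly bounded number of cuts of `𝒞`. -/
theorem bdd_many_cuts_through_a_point {X : Type*} (G : Set (X × X))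
    (hG : IsGraph G) (hdeg : BddDeg G)
    (𝒞 : Set (Set X)) (hcut : ∀ C ∈ 𝒞, IsCut G C)
    (r : ℕ) (hbdd : ∀ C ∈ 𝒞, gdiam G (innerB G C) ≤ (r : ℕ∞)) :
    ∃ N : ℕ, ∀ x : X, {C | C ∈ 𝒞 ∧ x ∈ innerB G C}.encard ≤ (N : ℕ∞) := by
  obtain ⟨d, hd⟩ := hdeg
  refine ⟨2 ^ ((d + 1) ^ (r + 1)), fun x => ?_⟩
  set B := gball G x (r + 1)
  have hBcard : B.encard ≤ ((d + 1) ^ (r + 1) : ℕ) := encard_gball_le hd x (r + 1)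
  have hBfin : B.Finite := finite_of_encard_le_coe hBcard
  have hinner : ∀ C ∈ 𝒞, x ∈ innerB G C → innerB G C ⊆ gball G x r :=
    fun C hC hx => subset_gball_of_gdiam_le hx (hbdd C hC)
  have hsub : ∀ C ∈ {C | C ∈ 𝒞 ∧ x ∈ innerB G C}, ∀ C' ∈ {C | C ∈ 𝒞 ∧ x ∈ innerB G C},
      C ∩ B = C' ∩ B → C ⊆ C' := fun C ⟨hC, hx⟩ C' ⟨hC', hx'⟩ =>
    subset_of_inter_gball_eq hG (fun _ hy => (hcut C hC).reach hG hx.1 hy) hx.1 hx'.1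
      (hinner C hC hx) (hinner C' hC' hx')
  calc {C | C ∈ 𝒞 ∧ x ∈ innerB G C}.encard ≤ (2 ^ B.ncard : ℕ) :=
        encard_le_two_pow_of_injOn_inter hBfin fun C hC C' hC' h =>
          (hsub C hC C' hC' h).antisymm (hsub C' hC' C hC h.symm)
    _ ≤ (2 ^ ((d + 1) ^ (r + 1)) : ℕ) := by
        gcongr
        · norm_num
        · rwa [← hBfin.cast_ncard_eq, Nat.cast_le] at hBcard
end

section
/- Let (X,G) be a graph with uniformly bounded degrees, let r ≥ 0, and let C, D be cuts of G lying on the same E_G-class with diam_G(∂iv C ∪ ∂ov C) ≤ r and diam_G(∂iv D ∪ ∂ov D) ≤ r. If there exist x ∈ ∂iv C ∪ ∂ov C and y ∈ ∂iv D ∪ ∂ov D such that B_G(r;x) ∩ B_G(r;y) = ∅, then C and D are nested with each other, i.e., at least one of C∩D, C∩D̄, C̄∩D, C̄∩D̄ is empty. -/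
open Set

section Aux

variable {X : Type*} {G : Set (X × X)}

lemma reach_refl (G : Set (X × X)) (x : X) : Reach G x x :=
  ⟨0, fun _ => x, rfl, rfl, fun i h => absurd h (Nat.not_lt_zero i)⟩

lemma reach_symm (hG : IsGraph G) {x y : X} (h : Reach G x y) : Reach G y x := by
  obtain ⟨n, f, h0, hn, hw⟩ := h
  refine ⟨n, fun j => f (n - j), by simp [hn], by simp [h0], ?_⟩
  intro i hi
  have ht : n - i - 1 < n := by omega
  have hstep := hw (n - i - 1) ht
  have h1 : n - i - 1 + 1 = n - i := by omega
  have h2 : n - (i + 1) = n - i - 1 := by omega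
  rw [h1] at hstep
  simp only [h2]
  exact hG.1 _ hstep

lemma reach_trans {x y z : X} (h1 : Reach G x y) (h2 : Reach G y z) : Reach G x z := by
  obtain ⟨n, f, hf0, hfn, hfw⟩ := h1
  obtain ⟨m, g, hg0, hgm, hgw⟩ := h2
  refine ⟨n + m, fun j => if j < n then f j else g (j - n), ?_, ?_, ?_⟩
  · show (if 0 < n then f 0 else g (0 - n)) = x
    by_cases h : 0 < n
    · rw [if_pos h]; exact hf0
    · have hn0 : n = 0 := by omega
      rw [if_neg h, Nat.zero_sub, hg0, ← hfn, hn0, hf0]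
  · show (if n + m < n then f (n + m) else g (n + m - n)) = z
    have h : ¬ (n + m < n) := by omega
    rw [if_neg h, Nat.add_sub_cancel_left]
    exact hgm
  · intro i hi
    show ((if i < n then f i else g (i - n)), (if i + 1 < n then f (i + 1) else g (i + 1 - n))) ∈ G
    by_cases h1 : i + 1 < n
    · have h2 : i < n := by omega
      rw [if_pos h1, if_pos h2]
      exact hfw i h2
    · by_cases h2 : i < n
      · have he : i + 1 = n := by omega
        rw [if_neg h1, if_pos h2, he, Nat.sub_self, hg0, ← hfn, ← he]
        exact hfw i h2
      · rw [if_neg h1, if_neg h2]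
        have h4 : i + 1 - n = (i - n) + 1 := by omega
        rw [h4]
        exact hgw (i - n) (by omega)

lemma reach_of_edge {a b : X} (h : (a, b) ∈ G) : Reach G a b := by
  refine ⟨1, fun j => if j = 0 then a else b, by simp, by simp, ?_⟩
  intro i hi
  have hi0 : i = 0 := by omega
  subst hi0
  simpa using h

lemma graphDist_le_walk {f : ℕ → X} {n : ℕ} (hw : IsWalk G f n) :
    graphDist G (f 0) (f n) ≤ (n : ℕ∞) := by
  unfold graphDist
  exact sInf_le ⟨n, f, rfl, rfl, rfl, hw⟩

lemma exists_walk_of_dist_le {x y : X} {r : ℕ} (h : graphDist G x y ≤ (r : ℕ∞)) :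
    ∃ n : ℕ, n ≤ r ∧ ∃ f : ℕ → X, f 0 = x ∧ f n = y ∧ IsWalk G f n := by
  classical
  have hex : ∃ n : ℕ, ∃ f : ℕ → X, f 0 = x ∧ f n = y ∧ IsWalk G f n := by
    by_contra hne
    push_neg at hne
    have hS : {d : ℕ∞ | ∃ (n : ℕ) (f : ℕ → X), d = (n : ℕ∞) ∧ f 0 = x ∧ f n = y ∧ IsWalk G f n}
        = (∅ : Set ℕ∞) := by
      ext d
      simp only [Set.mem_setOf_eq, Set.mem_empty_iff_false, iff_false]
      rintro ⟨n, f, rfl, h0, hn, hw⟩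
      exact hne n f h0 hn hw
    rw [graphDist, hS, sInf_empty] at h
    exact absurd h (by simp)
  have hlow : ((Nat.find hex : ℕ) : ℕ∞) ≤ graphDist G x y := by
    apply le_sInf
    rintro d ⟨n, f, rfl, h0, hn, hw⟩
    exact_mod_cast Nat.find_min' hex ⟨f, h0, hn, hw⟩
  have : ((Nat.find hex : ℕ) : ℕ∞) ≤ (r : ℕ∞) := hlow.trans h
  exact ⟨Nat.find hex, by exact_mod_cast this, Nat.find_spec hex⟩

lemma firstExit {P : ℕ → Prop} (n : ℕ) (h0 : P 0) (hn : ¬ P n) :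
    ∃ k, k + 1 ≤ n ∧ (∀ i ≤ k, P i) ∧ ¬ P (k + 1) := by
  classical
  have hex : ∃ m, ¬ P m := ⟨n, hn⟩
  have hm : ¬ P (Nat.find hex) := Nat.find_spec hex
  have hm0 : 0 < Nat.find hex := by
    rcases Nat.eq_zero_or_pos (Nat.find hex) with h | h
    · exact absurd (h ▸ h0) hm
    · exact h
  have hmn : Nat.find hex ≤ n := Nat.find_min' hex hn
  refine ⟨Nat.find hex - 1, by omega, ?_, ?_⟩
  · intro i hi
    by_contra hPi
    have := Nat.find_min' hex hPi
    omega
  · have heq : Nat.find hex - 1 + 1 = Nat.find hex := by omega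
    rw [heq]
    exact hm

lemma cross_inner {D : Set X} {a b : X} (hab : (a, b) ∈ G) (ha : a ∈ D) (hb : b ∉ D) :
    a ∈ innerB G D ∪ outerB G D := Or.inl ⟨ha, b, hb, hab⟩

lemma cross_outer {D : Set X} {a b : X} (hab : (a, b) ∈ G) (ha : a ∉ D) (hb : b ∈ D) :
    a ∈ innerB G D ∪ outerB G D := Or.inr ⟨ha, b, hb, hab⟩

lemma cross_compl {D : Set X} {a b : X} (hab : (a, b) ∈ G)
    (ha : a ∈ cCompl G D) (hb : b ∉ cCompl G D) : a ∈ innerB G D ∪ outerB G D := by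
  obtain ⟨haD, x, hxD, hr⟩ := ha
  have hbD : b ∈ D := by
    by_contra hbD
    exact hb ⟨hbD, x, hxD, reach_trans hr (reach_of_edge hab)⟩
  exact Or.inr ⟨haD, b, hbD, hab⟩

lemma dist_le_of_gdiam {A : Set X} {r : ℕ∞} (h : gdiam G A ≤ r) {z w : X}
    (hz : z ∈ A) (hw : w ∈ A) : graphDist G z w ≤ r := by
  refine le_trans ?_ h
  unfold gdiam
  exact le_trans (le_iSup₂ (f := fun (b : X) (_ : b ∈ A) => graphDist G z b) w hw)
    (le_iSup₂ (f := fun (a : X) (_ : a ∈ A) => ⨆ b ∈ A, graphDist G a b) z hz)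

lemma side_const {A B : Set X} {x₀ : X} {r : ℕ}
    (hdiam : gdiam G A ≤ (r : ℕ∞)) (hx : x₀ ∈ A)
    (havoid : ∀ w, graphDist G w x₀ ≤ (r : ℕ∞) → w ∉ innerB G B ∪ outerB G B) :
    ∀ z ∈ A, (z ∈ B ↔ x₀ ∈ B) := by
  intro z hz
  have hd : graphDist G z x₀ ≤ (r : ℕ∞) := dist_le_of_gdiam hdiam hz hx
  obtain ⟨n, hnr, f, hf0, hfn, hw⟩ := exists_walk_of_dist_le hd
  have hball : ∀ i ≤ n, graphDist G (f i) x₀ ≤ (r : ℕ∞) := by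
    intro i hi
    have hw' : IsWalk G (fun j => f (i + j)) (n - i) := by
      intro j hj
      have := hw (i + j) (by omega)
      simpa [Nat.add_assoc] using this
    have hle := graphDist_le_walk hw'
    simp only [Nat.add_zero] at hle
    rw [Nat.add_sub_cancel' hi, hfn] at hle
    exact hle.trans (by exact_mod_cast (by omega : n - i ≤ r))
  constructor
  · intro hzB
    by_contra hxB
    obtain ⟨k, hk, hall, hk1⟩ := firstExit (P := fun i => f i ∈ B) n
      (show f 0 ∈ B by rwa [hf0]) (show f n ∉ B by rwa [hfn])
    exact havoid (f k) (hball k (by omega))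
      (cross_inner (hw k (by omega)) (hall k le_rfl) hk1)
  · intro hxB
    by_contra hzB
    obtain ⟨k, hk, hall, hk1⟩ := firstExit (P := fun i => f i ∉ B) n
      (show f 0 ∉ B by rwa [hf0]) (show ¬ f n ∉ B by rw [hfn]; exact not_not_intro hxB)
    exact havoid (f k) (hball k (by omega))
      (cross_outer (hw k (by omega)) (hall k le_rfl) (not_not.mp hk1))

lemma key_nested (hG : IsGraph G) {C D C' D' : Set X}
    (hC' : C' = C ∨ C' = cCompl G C) (hD' : D' = D ∨ D' = cCompl G D)
    (h1 : ∀ z ∈ innerB G D ∪ outerB G D, z ∉ C')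
    (h2 : ∀ z ∈ innerB G C ∪ outerB G C, z ∉ D')
    (hesc : ∀ a ∈ D', ∃ w, w ∉ D' ∧ Reach G a w) :
    C' ∩ D' = ∅ := by
  by_contra h
  obtain ⟨a, haC, haD⟩ := Set.nonempty_iff_ne_empty.mpr h
  obtain ⟨w, hw1, hw2⟩ := hesc a haD
  obtain ⟨n, f, hf0, hfn, hwk⟩ := hw2
  obtain ⟨k, hkn, hallD, hkD⟩ := firstExit (P := fun i => f i ∈ D') n
    (show f 0 ∈ D' by rwa [hf0]) (show f n ∉ D' by rwa [hfn])
  have hedgek : (f k, f (k + 1)) ∈ G := hwk k (by omega)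
  have hkbd : f k ∈ innerB G D ∪ outerB G D := by
    rcases hD' with rfl | rfl
    · exact cross_inner hedgek (hallD k le_rfl) hkD
    · exact cross_compl hedgek (hallD k le_rfl) hkD
  have hkC : ¬ (f k ∈ C') := h1 _ hkbd
  obtain ⟨j, hjk, hallC, hjC⟩ := firstExit (P := fun i => f i ∈ C') k
    (show f 0 ∈ C' by rwa [hf0]) hkC
  have hedgej : (f j, f (j + 1)) ∈ G := hwk j (by omega)
  have hjbd : f j ∈ innerB G C ∪ outerB G C := by
    rcases hC' with rfl | rfl
    · exact cross_inner hedgej (hallC j le_rfl) hjC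
    · exact cross_compl hedgej (hallC j le_rfl) hjC
  exact h2 _ hjbd (hallD j (by omega))

end Aux

/-- Two cuts on the same `E_G`-class whose vertex boundaries have diameter
at most `r` and admit boundary points whose `r`-balls are disjoint must be nested. -/
theorem cuts_with_far_boundaries_are_nested {X : Type*} (G : Set (X × X))
    (hG : IsGraph G) (hdeg : BddDeg G) (r : ℕ)
    (C D : Set X) (hC : IsCut G C) (hD : IsCut G D) (hsame : SameClass G C D)
    (hCd : gdiam G (innerB G C ∪ outerB G C) ≤ (r : ℕ∞))
    (hDd : gdiam G (innerB G D ∪ outerB G D) ≤ (r : ℕ∞))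
    (x y : X) (hx : x ∈ innerB G C ∪ outerB G C) (hy : y ∈ innerB G D ∪ outerB G D)
    (hdisj : {z : X | graphDist G z x ≤ (r : ℕ∞)} ∩ {z : X | graphDist G z y ≤ (r : ℕ∞)} = ∅) :
    NestedPair G C D := by
  -- balls around x and y avoid the other cut's vertex boundary
  have havoid_y : ∀ w, graphDist G w y ≤ (r : ℕ∞) → w ∉ innerB G C ∪ outerB G C := by
    intro w hwy hwC
    have hwx : graphDist G w x ≤ (r : ℕ∞) := dist_le_of_gdiam hCd hwC hx
    have : w ∈ ({z : X | graphDist G z x ≤ (r : ℕ∞)} ∩ {z : X | graphDist G z y ≤ (r : ℕ∞)}) :=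
      ⟨hwx, hwy⟩
    rw [hdisj] at this
    exact this
  have havoid_x : ∀ w, graphDist G w x ≤ (r : ℕ∞) → w ∉ innerB G D ∪ outerB G D := by
    intro w hwx hwD
    have hwy : graphDist G w y ≤ (r : ℕ∞) := dist_le_of_gdiam hDd hwD hy
    have : w ∈ ({z : X | graphDist G z x ≤ (r : ℕ∞)} ∩ {z : X | graphDist G z y ≤ (r : ℕ∞)}) :=
      ⟨hwx, hwy⟩
    rw [hdisj] at this
    exact this
  have sideD : ∀ z ∈ innerB G D ∪ outerB G D, (z ∈ C ↔ y ∈ C) :=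
    side_const hDd hy havoid_y
  have sideC : ∀ z ∈ innerB G C ∪ outerB G C, (z ∈ D ↔ x ∈ D) :=
    side_const hCd hx havoid_x
  -- escape lemmas
  have hescD : ∀ a ∈ D, ∃ w, w ∉ D ∧ Reach G a w := by
    obtain ⟨⟨x₀, hx₀, hsub, hneq⟩, _⟩ := hD
    have hex : ∃ w, w ∈ cls G x₀ ∧ w ∉ D := by
      by_contra hne
      push_neg at hne
      exact hneq (Set.Subset.antisymm hsub (fun w hw => hne w hw))
    obtain ⟨w, hwc, hwD⟩ := hex
    intro a ha
    exact ⟨w, hwD, reach_trans (reach_symm hG (hsub ha)) hwc⟩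
  have hescD' : ∀ a ∈ cCompl G D, ∃ w, w ∉ cCompl G D ∧ Reach G a w := by
    rintro a ⟨haD, x', hx'D, hr⟩
    exact ⟨x', fun h => h.1 hx'D, reach_symm hG hr⟩
  by_cases hyC : y ∈ C <;> by_cases hxD : x ∈ D
  · -- y ∈ C, x ∈ D : cCompl C ∩ cCompl D = ∅
    refine Or.inr (Or.inr (Or.inr ?_))
    refine key_nested hG (Or.inr rfl) (Or.inr rfl) ?_ ?_ hescD'
    · intro z hz hcc
      exact hcc.1 ((sideD z hz).mpr hyC)
    · intro z hz hcc
      exact hcc.1 ((sideC z hz).mpr hxD)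
  · -- y ∈ C, x ∉ D : cCompl C ∩ D = ∅
    refine Or.inr (Or.inr (Or.inl ?_))
    refine key_nested hG (Or.inr rfl) (Or.inl rfl) ?_ ?_ hescD
    · intro z hz hcc
      exact hcc.1 ((sideD z hz).mpr hyC)
    · intro z hz hzD
      exact hxD ((sideC z hz).mp hzD)
  · -- y ∉ C, x ∈ D : C ∩ cCompl D = ∅
    refine Or.inr (Or.inl ?_)
    refine key_nested hG (Or.inl rfl) (Or.inr rfl) ?_ ?_ hescD'
    · intro z hz hzC
      exact hyC ((sideD z hz).mp hzC)
    · intro z hz hcc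
      exact hcc.1 ((sideC z hz).mpr hxD)
  · -- y ∉ C, x ∉ D : C ∩ D = ∅
    refine Or.inl ?_
    refine key_nested hG (Or.inl rfl) (Or.inl rfl) ?_ ?_ hescD
    · intro z hz hzC
      exact hyC ((sideD z hz).mp hzC)
    · intro z hz hzD
      exact hxD ((sideC z hz).mp hzD)
end
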